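/- Let S be a semitransitive subsemigroup of the singular part I_n \ S_n (n ≥ 2). Then the union of the domains of the idempotents of S is the whole underlying set X, and S contains at least two distinct non-zero idempotents. -/

import Mathlib

/-! A power of an element of a finite semigroup is idempotent. Semitransitivity applied to the
pair `(x, x)` gives `φ ∈ S` fixing `x`, and the idempotent power of `φ` still lies in `S` and fixes
`x`; so every point lies in the domain of an idempotent of `S`. Take such an idempotent `g` for some
point; being singular, `g` is undefined at some `z`, while an idempotent `h` of `S` fixes `z`.
Hence `g ≠ h`, and both are nonzero because each fixes a point. -/

/-- `ISemi n` is the symmetric inverse semigroup `I_n`, realized as the set of all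
partial injective maps (partial permutations) of the `n`-element set `Fin n`,
with composition given by `PEquiv.trans` (apply the left factor first, matching
the right-action convention `x φ`). -/
abbrev ISemi (n : ℕ) := PEquiv (Fin n) (Fin n)

/-- `S` is a subsemigroup of `I_n`: a subset closed under composition. -/
def IsSubsemigroup {n : ℕ} (S : Set (ISemi n)) : Prop :=
  ∀ a ∈ S, ∀ b ∈ S, a.trans b ∈ S

/-- `φ` belongs to the singular part `I_n \ S_n`: its domain is a proper subset
of the underlying set, i.e. it is undefined somewhere. -/
def IsSingular {n : ℕ} (φ : ISemi n) : Prop :=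
  ∃ x : Fin n, φ x = none

/-- `S` is semitransitive: for all `x, y` there is `φ ∈ S` with `φ x = y` or `φ y = x`. -/
def Semitransitive {n : ℕ} (S : Set (ISemi n)) : Prop :=
  ∀ x y : Fin n, ∃ φ ∈ S, φ x = some y ∨ φ y = some x

/-- The semitransitivity preorder induced by `S`: `x ≥ y` iff some `φ ∈ S` maps `x` to `y`. -/
def STGe {n : ℕ} (S : Set (ISemi n)) (x y : Fin n) : Prop :=
  ∃ φ ∈ S, φ x = some y

/-- The transitivity block of `x`: the equivalence class of `x` under `x ≥ y ∧ y ≥ x`. -/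
def STBlock {n : ℕ} (S : Set (ISemi n)) (x : Fin n) : Set (Fin n) :=
  {y | STGe S x y ∧ STGe S y x}

/-- `k`-th power of `φ` under composition (`pePow φ 0` is the identity). -/
def pePow {n : ℕ} (φ : ISemi n) : ℕ → ISemi n
  | 0 => PEquiv.refl (Fin n)
  | k + 1 => (pePow φ k).trans φ

theorem exists_ne_zero_isIdempotentElem_pow {M : Type*} [Monoid M] [Finite M] (a : M) :
    ∃ k ≠ 0, IsIdempotentElem (a ^ k) := by
  obtain ⟨i, j, hij, hpow⟩ : ∃ i j, i < j ∧ a ^ i = a ^ j := by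
    obtain ⟨i, j, hne, h⟩ := Finite.exists_ne_map_eq_of_infinite (a ^ · : ℕ → M)
    rcases hne.lt_or_gt with hlt | hlt
    exacts [⟨i, j, hlt, h⟩, ⟨j, i, hlt, h.symm⟩]
  set p := j - i
  have hperiodic : ∀ t, a ^ (i + p * t) = a ^ i := by
    intro t
    induction t with
    | zero => simp
    | succ t ih =>
      rw [mul_add_one, ← add_assoc, pow_add, ih, ← pow_add, Nat.add_sub_cancel' hij.le, hpow]
  have hle : i ≤ p * (i + 1) := by nlinarith [Nat.sub_pos_of_lt hij]
  refine ⟨p * (i + 1), Nat.mul_ne_zero (by omega) (by omega), ?_⟩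
  calc a ^ (p * (i + 1)) * a ^ (p * (i + 1))
      = a ^ (p * (i + 1) - i) * a ^ (i + p * (i + 1)) := by
        rw [← pow_add, ← pow_add]; congr 1; omega
    _ = a ^ (p * (i + 1)) := by rw [hperiodic, ← pow_add, Nat.sub_add_cancel hle]

namespace PEquiv

variable {α β : Type*}

instance [Finite α] [Finite β] : Finite (α ≃. β) :=
  Finite.of_injective _ DFunLike.coe_injective

/-- Multiplication is `PEquiv.trans`, so `a * b` applies `a` first. -/
instance : Monoid (α ≃. α) where
  mul a b := a.trans b
  one := PEquiv.refl α
  mul_assoc := trans_assoc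
  one_mul := refl_trans
  mul_one := trans_refl

theorem mul_apply (a b : α ≃. α) (x : α) : (a * b) x = (a x).bind b := rfl

theorem pow_apply_eq_self {a : α ≃. α} {x : α} (hx : a x = some x) (k : ℕ) :
    (a ^ k) x = some x := by
  induction k with
  | zero => rfl
  | succ k ih => rw [pow_succ, mul_apply, ih, Option.bind_some, hx]

theorem ne_bot_of_apply_eq_some {f : α ≃. β} {x : α} {y : β} (h : f x = some y) : f ≠ ⊥ := by
  rintro rfl
  simp at h

end PEquiv

theorem IsSubsemigroup.pow_mem {n : ℕ} {S : Set (ISemi n)} (hS : IsSubsemigroup S) {a : ISemi n}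
    (ha : a ∈ S) {k : ℕ} (hk : k ≠ 0) : a ^ k ∈ S := by
  induction k with
  | zero => exact absurd rfl hk
  | succ k ih =>
    rcases eq_or_ne k 0 with rfl | hk'
    · simpa using ha
    · exact hS _ (ih hk') _ ha

theorem Semitransitive.exists_isIdempotentElem_apply_eq_self {n : ℕ} {S : Set (ISemi n)}
    (hst : Semitransitive S) (hS : IsSubsemigroup S) (x : Fin n) :
    ∃ e ∈ S, IsIdempotentElem e ∧ e x = some x := by
  obtain ⟨φ, hφS, hφx⟩ : ∃ φ ∈ S, φ x = some x := by simpa using hst x x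
  obtain ⟨k, hk, hidem⟩ := exists_ne_zero_isIdempotentElem_pow φ
  exact ⟨φ ^ k, hS.pow_mem hφS hk, hidem, PEquiv.pow_apply_eq_self hφx k⟩

/-- for a semitransitive subsemigroup `S` of the singular part
(`n ≥ 2`), the domains of the idempotents of `S` cover the underlying set and
`S` has at least two distinct non-zero idempotents. -/
theorem stmt13 (n : ℕ) (hn : 2 ≤ n) (S : Set (ISemi n))
    (hsub : IsSubsemigroup S)
    (hsing : ∀ φ ∈ S, IsSingular φ)
    (hst : Semitransitive S) :
    (∀ x : Fin n, ∃ e ∈ S, e.trans e = e ∧ (e x).isSome) ∧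
    (∃ g h : ISemi n, g ∈ S ∧ h ∈ S ∧ g ≠ h ∧
      g.trans g = g ∧ h.trans h = h ∧ g ≠ ⊥ ∧ h ≠ ⊥) := by
  have hfix := hst.exists_isIdempotentElem_apply_eq_self hsub
  refine ⟨fun x => ?_, ?_⟩
  · obtain ⟨e, he, he_idem, hex⟩ := hfix x
    exact ⟨e, he, he_idem, by simp [hex]⟩
  · obtain ⟨g, hg, hg_idem, hg0⟩ := hfix ⟨0, by omega⟩
    obtain ⟨z, hgz⟩ := hsing g hg
    obtain ⟨h, hh, hh_idem, hhz⟩ := hfix z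
    refine ⟨g, h, hg, hh, ?_, hg_idem, hh_idem, PEquiv.ne_bot_of_apply_eq_some hg0,
      PEquiv.ne_bot_of_apply_eq_some hhz⟩
    rintro rfl
    simp [hhz] at hgz
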